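/- Let α, λ > 0 and let k ≥ 1 be a natural number. Then for every t > 0 the function t ↦ t^k E_{α,k+1}(−λ t^α) is differentiable at t with d/dt ( t^k E_{α,k+1}(−λ t^α) ) = t^{k−1} E_{α,k}(−λ t^α). -/

import Mathlib

/-!
With `c = -λ` and `s > 0`, `s ^ k * E_{α,k+1}(c s ^ α)` is the series
`∑ₙ cⁿ s ^ (αn + k) / Γ(αn + k + 1)`. Since `Γ(a + 1) = a Γ(a)`, its `n`-th term
differentiates to `cⁿ s ^ (αn + k - 1) / Γ(αn + k)`, the `n`-th term of
`s ^ (k - 1) E_{α,k}(c s ^ α)`. Termwise differentiation is justified on `(t/2, 2t)` by the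
bound `Γ(x) ≥ M ^ (x - 1) e^{-M}` for `x ≥ 1`, `M > 0` (cut the Euler integral at `M`), which
dominates `|c|ⁿ / Γ(αn + β)` by a geometric series once `M ^ α > |c|`.
-/

/-- The Mittag-Leffler function `E_{α,β}(x) = ∑_{k=0}^∞ x^k / Γ(αk + β)` for real `x`. -/
noncomputable def mittagLeffler (α β x : ℝ) : ℝ :=
  ∑' k : ℕ, x ^ k / Real.Gamma (α * k + β)

open Real Filter Asymptotics MeasureTheory Set

theorem Real.rpow_sub_one_mul_exp_neg_le_Gamma {x M : ℝ} (hx : 1 ≤ x) (hM : 0 < M) :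
    M ^ (x - 1) * exp (-M) ≤ Gamma x := by
  have hx0 : 0 < x := by linarith
  have hint := GammaIntegral_convergent hx0
  rw [Gamma_eq_integral hx0, ← integral_exp_neg_Ioi, ← integral_const_mul]
  calc ∫ s in Ioi M, M ^ (x - 1) * exp (-s)
      ≤ ∫ s in Ioi M, exp (-s) * s ^ (x - 1) := by
        refine setIntegral_mono_on ((integrableOn_exp_neg_Ioi M).const_mul _)
          (hint.mono_set (Ioi_subset_Ioi hM.le)) measurableSet_Ioi fun s hs => ?_
        rw [mul_comm]
        gcongr
        exact (mem_Ioi.1 hs).le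
    _ ≤ ∫ s in Ioi 0, exp (-s) * s ^ (x - 1) :=
        setIntegral_mono_set hint
          ((ae_restrict_mem measurableSet_Ioi).mono fun s hs =>
            mul_nonneg (exp_pos _).le (rpow_nonneg (le_of_lt hs) _))
          (Ioi_subset_Ioi hM.le).eventuallyLE

theorem summable_pow_div_Gamma {α : ℝ} (hα : 0 < α) (β c : ℝ) :
    Summable fun n : ℕ => c ^ n / Gamma (α * n + β) := by
  obtain ⟨M, hM, hcM⟩ : ∃ M : ℝ, 0 < M ∧ |c| < M ^ α :=
    ⟨(|c| + 1) ^ α⁻¹, by positivity, by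
      rw [← rpow_mul (by positivity), inv_mul_cancel₀ hα.ne', rpow_one]; linarith⟩
  have hMα : 0 < M ^ α := by positivity
  have hgeom : Summable fun n : ℕ => (|c| / M ^ α) ^ n :=
    summable_geometric_of_lt_one (by positivity) ((div_lt_one hMα).2 hcM)
  have hlarge : ∀ᶠ n : ℕ in atTop, 1 ≤ α * n + β :=
    ((tendsto_natCast_atTop_atTop.const_mul_atTop hα).atTop_add
      tendsto_const_nhds).eventually_ge_atTop 1
  refine summable_of_isBigO_nat hgeom (isBigO_iff.2 ⟨M ^ (1 - β) * exp M, ?_⟩)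
  filter_upwards [hlarge] with n hn
  have hΓ := rpow_sub_one_mul_exp_neg_le_Gamma hn hM
  have hsplit : M ^ (α * n + β - 1) = (M ^ α) ^ n * M ^ (β - 1) := by
    rw [← rpow_natCast, ← rpow_mul hM.le, ← rpow_add hM, add_sub_assoc]
  calc ‖c ^ n / Gamma (α * n + β)‖ = |c| ^ n / Gamma (α * n + β) := by
        rw [norm_div, norm_pow, Real.norm_eq_abs, Real.norm_of_nonneg (hΓ.trans' (by positivity))]
    _ ≤ |c| ^ n / (M ^ (α * n + β - 1) * exp (-M)) :=
        div_le_div_of_nonneg_left (by positivity) (by positivity) hΓ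
    _ = M ^ (1 - β) * exp M * ‖(|c| / M ^ α) ^ n‖ := by
        rw [Real.norm_of_nonneg (by positivity), hsplit, div_pow, exp_neg,
          show (1 : ℝ) - β = -(β - 1) by ring, rpow_neg hM.le]
        field_simp

theorem pow_mul_rpow_mul_add {s : ℝ} (hs : 0 < s) (α γ c : ℝ) (n : ℕ) :
    c ^ n * s ^ (α * n + γ) = s ^ γ * (c * s ^ α) ^ n := by
  rw [mul_pow, ← rpow_natCast (s ^ α), ← rpow_mul hs.le, rpow_add hs]
  ring

theorem summable_pow_mul_rpow_div_Gamma {α s : ℝ} (hα : 0 < α) (hs : 0 < s) (β γ c : ℝ) :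
    Summable fun n : ℕ => c ^ n * (s ^ (α * n + γ) / Gamma (α * n + β)) := by
  refine ((summable_pow_div_Gamma hα β (c * s ^ α)).mul_left (s ^ γ)).congr fun n => ?_
  rw [← mul_div_assoc, ← mul_div_assoc, pow_mul_rpow_mul_add hs]

theorem rpow_mul_mittagLeffler {s : ℝ} (hs : 0 < s) (α β γ c : ℝ) :
    s ^ γ * mittagLeffler α β (c * s ^ α) =
      ∑' n : ℕ, c ^ n * (s ^ (α * n + γ) / Gamma (α * n + β)) := by
  simp only [mittagLeffler, ← tsum_mul_left, ← mul_div_assoc, pow_mul_rpow_mul_add hs]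

theorem hasDerivAt_rpow_div_Gamma_add_one {a y : ℝ} (ha : a ≠ 0) (hy : y ≠ 0) :
    HasDerivAt (fun s => s ^ a / Gamma (a + 1)) (y ^ (a - 1) / Gamma a) y := by
  refine ((hasDerivAt_rpow_const (Or.inl hy)).div_const _).congr_deriv ?_
  rw [Gamma_add_one ha, mul_div_mul_left _ _ ha]

theorem rpow_le_rpow_add_rpow {a b s : ℝ} (ha : 0 < a) (has : a ≤ s) (hsb : s ≤ b) (e : ℝ) :
    s ^ e ≤ a ^ e + b ^ e := by
  have hb : 0 < b := by linarith
  rcases le_total e 0 with he | he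
  · linarith [rpow_le_rpow_of_nonpos ha has he, rpow_pos_of_pos hb e]
  · linarith [rpow_le_rpow (by linarith) hsb he, rpow_pos_of_pos ha e]

theorem hasDerivAt_tsum_pow_mul_rpow_div_Gamma {α γ t : ℝ} (hα : 0 < α) (hγ : 0 < γ)
    (ht : 0 < t) (c : ℝ) :
    HasDerivAt (fun s => ∑' n : ℕ, c ^ n * (s ^ (α * n + γ) / Gamma (α * n + γ + 1)))
      (∑' n : ℕ, c ^ n * (t ^ (α * n + γ - 1) / Gamma (α * n + γ))) t := by
  have htU : t ∈ Ioo (t / 2) (2 * t) := ⟨by linarith, by linarith⟩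
  have hterm : ∀ (n : ℕ), ∀ y ∈ Ioo (t / 2) (2 * t),
      HasDerivAt (fun s => c ^ n * (s ^ (α * n + γ) / Gamma (α * n + γ + 1)))
        (c ^ n * (y ^ (α * n + γ - 1) / Gamma (α * n + γ))) y := fun n y hy =>
    (hasDerivAt_rpow_div_Gamma_add_one (by positivity) (by linarith [hy.1])).const_mul _
  have hbound : ∀ (n : ℕ), ∀ y ∈ Ioo (t / 2) (2 * t),
      ‖c ^ n * (y ^ (α * n + γ - 1) / Gamma (α * n + γ))‖ ≤
        |c| ^ n * ((t / 2) ^ (α * n + (γ - 1)) / Gamma (α * n + γ)) +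
          |c| ^ n * ((2 * t) ^ (α * n + (γ - 1)) / Gamma (α * n + γ)) := by
    intro n y hy
    have hΓ : 0 < Gamma (α * n + γ) := Gamma_pos_of_pos (by positivity)
    rw [norm_mul, norm_pow, norm_div, Real.norm_eq_abs, Real.norm_of_nonneg hΓ.le,
      Real.norm_of_nonneg (rpow_nonneg (by linarith [hy.1]) _), ← mul_add, ← add_div,
      ← add_sub_assoc]
    gcongr
    exact rpow_le_rpow_add_rpow (by positivity) hy.1.le hy.2.le _
  have hsum := (summable_pow_mul_rpow_div_Gamma hα (by positivity : 0 < t / 2) γ (γ - 1) |c|).add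
    (summable_pow_mul_rpow_div_Gamma hα (by positivity : 0 < 2 * t) γ (γ - 1) |c|)
  have hsum_t : Summable fun n : ℕ => c ^ n * (t ^ (α * n + γ) / Gamma (α * n + γ + 1)) := by
    simpa only [add_assoc] using summable_pow_mul_rpow_div_Gamma hα ht (γ + 1) γ c
  exact hasDerivAt_tsum_of_isPreconnected hsum isOpen_Ioo isPreconnected_Ioo hterm hbound htU
    hsum_t htU

theorem hasDerivAt_rpow_mul_mittagLeffler {α γ t : ℝ} (hα : 0 < α) (hγ : 0 < γ) (ht : 0 < t)
    (c : ℝ) :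
    HasDerivAt (fun s => s ^ γ * mittagLeffler α (γ + 1) (c * s ^ α))
      (t ^ (γ - 1) * mittagLeffler α γ (c * t ^ α)) t := by
  rw [rpow_mul_mittagLeffler ht]
  simp only [← add_sub_assoc]
  refine (hasDerivAt_tsum_pow_mul_rpow_div_Gamma hα hγ ht c).congr_of_eventuallyEq ?_
  filter_upwards [Ioi_mem_nhds ht] with s hs
  rw [rpow_mul_mittagLeffler hs]
  simp only [add_assoc]

theorem hasDerivAt_pow_mittagLeffler_general (α lam t : ℝ) (k : ℕ) (hα : 0 < α)
    (hk : 1 ≤ k) (ht : 0 < t) :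
    HasDerivAt (fun s : ℝ => s ^ k * mittagLeffler α ((k : ℝ) + 1) (-lam * s ^ α))
      (t ^ (k - 1) * mittagLeffler α (k : ℝ) (-lam * t ^ α)) t := by
  have h := hasDerivAt_rpow_mul_mittagLeffler hα (Nat.cast_pos.2 hk) ht (-lam)
  rw [← Nat.cast_pred hk, rpow_natCast] at h
  simpa only [rpow_natCast] using h

/-- For `α, λ > 0`, `k ≥ 1` a natural number and `t > 0`:
`d/dt ( t^k E_{α,k+1}(-λ t^α) ) = t^{k-1} E_{α,k}(-λ t^α)`. -/
theorem hasDerivAt_pow_mittagLeffler (α lam t : ℝ) (k : ℕ) (hα : 0 < α) (hlam : 0 < lam)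
    (hk : 1 ≤ k) (ht : 0 < t) :
    HasDerivAt (fun s : ℝ => s ^ k * mittagLeffler α ((k : ℝ) + 1) (-lam * s ^ α))
      (t ^ (k - 1) * mittagLeffler α (k : ℝ) (-lam * t ^ α)) t :=
  hasDerivAt_pow_mittagLeffler_general α lam t k hα hk ht
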